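/- For every k ∈ ℕ, the free semigroup action (X,G) is chain recurrent if and only if (X,G^k) is chain recurrent. -/
import Mathlib


open Metric Filter Set
open scoped Classical

noncomputable section

variable {X : Type*} [MetricSpace X] {Y : Type*} [MetricSpace Y] {ι κ : Type*}

/-- `c` satisfies the `(w, δ)`-chain condition along the word `w`. -/
def IsChainSeq (f : ι → X → X) (w : List ι) (δ : ℝ) (c : ℕ → X) : Prop :=
  ∀ (j : ℕ) (h : j < w.length), dist (f (w.get ⟨j, h⟩) (c j)) (c (j + 1)) ≤ δ

/-- There is a `(w, δ)`-chain from `a` to `b` with `|w| = n`. -/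
def ChainFrom (f : ι → X → X) (δ : ℝ) (a b : X) (n : ℕ) : Prop :=
  ∃ w : List ι, w.length = n ∧ ∃ c : ℕ → X, IsChainSeq f w δ c ∧ c 0 = a ∧ c n = b

/-- `x` is a chain recurrent point of the action generated by `f`. -/
def ChainRecurrentPt (f : ι → X → X) (x : X) : Prop :=
  ∀ ε : ℝ, 0 < ε → ∃ n : ℕ, 0 < n ∧ ChainFrom f ε x x n

/-- The action generated by `f` is chain recurrent. -/
def ChainRecurrent (f : ι → X → X) : Prop := ∀ x : X, ChainRecurrentPt f x

/-- The action generated by `f` is chain transitive. -/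
def ChainTransitive (f : ι → X → X) : Prop :=
  ∀ ε : ℝ, 0 < ε → ∀ a b : X, ∃ n : ℕ, 0 < n ∧ ChainFrom f ε a b n

/-- The action generated by `f` is chain mixing. -/
def ChainMixing (f : ι → X → X) : Prop :=
  ∀ ε : ℝ, 0 < ε → ∃ N : ℕ, 0 < N ∧ ∀ a b : X, ∀ n : ℕ, N ≤ n → ChainFrom f ε a b n

/-- The `ε`-chain recurrence time `r_ε(x, G)`. -/
def rTime (f : ι → X → X) (ε : ℝ) (x : X) : ℕ :=
  sInf {n : ℕ | 0 < n ∧ ChainFrom f ε x x n}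

/-- `r_ε(G) = max_x r_ε(x, G)`. -/
def rTimeSup (f : ι → X → X) (ε : ℝ) : ℕ :=
  sSup (Set.range fun x : X => rTime f ε x)

/-- The chain mixing time `m_ε(x, δ, G)`. -/
def mTime (f : ι → X → X) (ε δ : ℝ) (x : X) : ℕ :=
  sInf {N : ℕ | ∀ n : ℕ, N ≤ n → ∀ y : X, ∃ z : X, dist z x < δ ∧ ChainFrom f ε z y n}

/-- `m_ε(δ, G) = max_x m_ε(x, δ, G)`. -/
def mTimeSup (f : ι → X → X) (ε δ : ℝ) : ℕ :=
  sSup (Set.range fun x : X => mTime f ε δ x)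

/-- `f_w = f_{i₀} ∘ f_{i₁} ∘ ⋯ ∘ f_{i_{k-1}}` applied to `x`. -/
def applyWord (f : ι → X → X) (w : List ι) (x : X) : X := w.foldr f x

/-- The generators of `G^k`, indexed by the words of length `k`. -/
def powerGens (f : ι → X → X) (k : ℕ) : (Fin k → ι) → X → X :=
  fun u => applyWord f (List.ofFn u)

/-- The generators `f_j × g_k` of the product action `G × H`. -/
def prodGens (f : ι → X → X) (g : κ → Y → Y) : ι × κ → X × Y → X × Y :=
  fun p z => (f p.1 z.1, g p.2 z.2)

/-- `T_ε(x)`: the set of lengths of `(w, ε)`-chains from `x` to itself. -/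
def Tset (f : ι → X → X) (ε : ℝ) (x : X) : Set ℕ :=
  {n : ℕ | 0 < n ∧ ChainFrom f ε x x n}

/-- `k = gcd T` for a set `T ⊆ ℕ`. -/
def IsGCDOf (T : Set ℕ) (k : ℕ) : Prop :=
  (∀ t ∈ T, k ∣ t) ∧ ∀ d : ℕ, (∀ t ∈ T, d ∣ t) → d ∣ k

/-- `x ∼_ε y`: there is an `(w, ε)`-chain from `x` to `y` whose length is a multiple of `k`. -/
def RelEps (f : ι → X → X) (ε : ℝ) (k : ℕ) (x y : X) : Prop :=
  ∃ n : ℕ, 0 < n ∧ k ∣ n ∧ ChainFrom f ε x y n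

/-- The orbit segment: the first `j` letters of `w` applied, in order, to `x`. -/
def orbitSeg (f : ι → X → X) (w : List ι) (x : X) (j : ℕ) : X :=
  (w.take j).foldl (fun y i => f i y) x

/-- The Bowen-type word metric `d_w`. -/
def wordDist (f : ι → X → X) (w : List ι) (x y : X) : ℝ :=
  ⨆ j : Fin (w.length + 1), dist (orbitSeg f w x (j : ℕ)) (orbitSeg f w y (j : ℕ))

/-- `N(w, ε, G)`: maximal cardinality of a `(w, ε, G)`-separated subset of `X`. -/
def sepMax (f : ι → X → X) (w : List ι) (ε : ℝ) : ℕ :=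
  sSup {k : ℕ | ∃ K : Finset X,
    (∀ x ∈ K, ∀ y ∈ K, x ≠ y → ε ≤ wordDist f w x y) ∧ K.card = k}

/-- Bufetov's topological entropy `h(G)` of a free semigroup action. -/
def topEntropy {m : ℕ} (f : Fin m → X → X) : ℝ :=
  ⨆ ε : {e : ℝ // 0 < e},
    Filter.limsup (fun n : ℕ =>
      Real.log ((∑ w : Fin n → Fin m, (sepMax f (List.ofFn w) ε.1 : ℝ)) / (m : ℝ) ^ n) / (n : ℝ))
      Filter.atTop

/-- `N*(w, ε, δ, G)`: maximal cardinality of a `(w, ε, δ, G)`-pseudo-separated set. -/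
def pseudoSepMax (f : ι → X → X) (w : List ι) (ε δ : ℝ) : ℕ :=
  sSup {k : ℕ | ∃ K : Finset (ℕ → X),
    (∀ c ∈ K, IsChainSeq f w δ c) ∧
    (∀ c ∈ K, ∀ c' ∈ K, c ≠ c' → ∃ j : ℕ, j < w.length ∧ ε < dist (c j) (c' j)) ∧
    K.card = k}

/-- `B*(w, ε, δ, G)`: minimal cardinality of a `(w, ε, δ, G)`-pseudo-spanning set. -/
def pseudoSpanMin (f : ι → X → X) (w : List ι) (ε δ : ℝ) : ℕ :=
  sInf {k : ℕ | ∃ K : Finset (ℕ → X),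
    (∀ c ∈ K, IsChainSeq f w δ c) ∧
    (∀ c : ℕ → X, IsChainSeq f w δ c →
      ∃ c' ∈ K, ∀ j : ℕ, j < w.length → dist (c j) (c' j) ≤ ε) ∧
    K.card = k}

/-- The pseudo-entropy `h*(G)` of a free semigroup action. -/
def pseudoEntropy {m : ℕ} (f : Fin m → X → X) : ℝ :=
  ⨆ ε : {e : ℝ // 0 < e}, ⨅ δ : {d : ℝ // 0 < d},
    Filter.limsup (fun n : ℕ =>
      Real.log ((∑ w : Fin n → Fin m, (pseudoSepMax f (List.ofFn w) ε.1 δ.1 : ℝ)) / (m : ℝ) ^ n)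
        / (n : ℝ)) Filter.atTop

/-- The metric `d'(ω, ω') = m^{-k}`, `k = inf {n | ωₙ ≠ ω'ₙ}`, on `Σ_m^+ = ℕ → Fin m`. -/
def sigmaDist (m : ℕ) (ω ω' : ℕ → Fin m) : ℝ :=
  if h : ∃ n : ℕ, ω n ≠ ω' n then (1 / (m : ℝ)) ^ Nat.find h else 0

/-- The metric `D = max {d', d}` on `Σ_m^+ × X`. -/
def skewDist (m : ℕ) (p q : (ℕ → Fin m) × X) : ℝ :=
  max (sigmaDist m p.1 q.1) (dist p.2 q.2)

/-- The skew-product transformation `F(ω, x) = (σ ω, f_{ω 0} x)`. -/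
def skewMap {m : ℕ} (f : Fin m → X → X) : (ℕ → Fin m) × X → (ℕ → Fin m) × X :=
  fun p => (fun n => p.1 (n + 1), f (p.1 0) p.2)

/-- `c` is a `δ`-pseudo-orbit of length `n + 1` of the single map `F`,
w.r.t. the distance function `D`. -/
def IsPseudoOrbit {Z : Type*} (D : Z → Z → ℝ) (F : Z → Z) (n : ℕ) (δ : ℝ) (c : ℕ → Z) : Prop :=
  ∀ j : ℕ, j < n → D (F (c j)) (c (j + 1)) ≤ δ

/-- `N*(n, ε, δ, F)` for a single map `F` w.r.t. a distance function `D`. -/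
def pseudoSepMaxMap {Z : Type*} (D : Z → Z → ℝ) (F : Z → Z) (n : ℕ) (ε δ : ℝ) : ℕ :=
  sSup {k : ℕ | ∃ K : Finset (ℕ → Z),
    (∀ c ∈ K, IsPseudoOrbit D F n δ c) ∧
    (∀ c ∈ K, ∀ c' ∈ K, c ≠ c' → ∃ j : ℕ, j < n ∧ ε < D (c j) (c' j)) ∧
    K.card = k}

/-- `B*(n, ε, δ, F)` for a single map `F` w.r.t. a distance function `D`. -/
def pseudoSpanMinMap {Z : Type*} (D : Z → Z → ℝ) (F : Z → Z) (n : ℕ) (ε δ : ℝ) : ℕ :=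
  sInf {k : ℕ | ∃ K : Finset (ℕ → Z),
    (∀ c ∈ K, IsPseudoOrbit D F n δ c) ∧
    (∀ c : ℕ → Z, IsPseudoOrbit D F n δ c →
      ∃ c' ∈ K, ∀ j : ℕ, j ≤ n → D (c j) (c' j) ≤ ε) ∧
    K.card = k}

/-- The pseudo-entropy `h*(F)` of a single map `F` w.r.t. a distance function `D`. -/
def pseudoEntropyMap {Z : Type*} (D : Z → Z → ℝ) (F : Z → Z) : ℝ :=
  ⨆ ε : {e : ℝ // 0 < e}, ⨅ δ : {d : ℝ // 0 < d},
    Filter.limsup (fun n : ℕ =>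
      Real.log (pseudoSepMaxMap D F n ε.1 δ.1 : ℝ) / (n : ℝ)) Filter.atTop

/-- An `ε`-chain of length `n` from `a` to `b` for a single map. -/
def ChainFromMap {Z : Type*} (D : Z → Z → ℝ) (F : Z → Z) (δ : ℝ) (a b : Z) (n : ℕ) : Prop :=
  ∃ c : ℕ → Z, IsPseudoOrbit D F n δ c ∧ c 0 = a ∧ c n = b

/-- `r_ε(z, F)` for a single map. -/
def rTimeMap {Z : Type*} (D : Z → Z → ℝ) (F : Z → Z) (ε : ℝ) (z : Z) : ℕ :=
  sInf {n : ℕ | 0 < n ∧ ChainFromMap D F ε z z n}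

/-- `r_ε(F)` for a single map. -/
def rTimeMapSup {Z : Type*} (D : Z → Z → ℝ) (F : Z → Z) (ε : ℝ) : ℕ :=
  sSup (Set.range fun z : Z => rTimeMap D F ε z)

/-- `m_ε(z, δ, F)` for a single map. -/
def mTimeMap {Z : Type*} (D : Z → Z → ℝ) (F : Z → Z) (ε δ : ℝ) (z : Z) : ℕ :=
  sInf {N : ℕ | ∀ n : ℕ, N ≤ n → ∀ y : Z, ∃ z' : Z, D z' z < δ ∧ ChainFromMap D F ε z' y n}

/-- `m_ε(δ, F)` for a single map. -/
def mTimeMapSup {Z : Type*} (D : Z → Z → ℝ) (F : Z → Z) (ε δ : ℝ) : ℕ :=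
  sSup (Set.range fun z : Z => mTimeMap D F ε δ z)

/-- `N_δ(X)`: the smallest number of sets of diameter at most `δ` that cover `X`. -/
def coverNum (X : Type*) [MetricSpace X] (δ : ℝ) : ℕ :=
  sInf {k : ℕ | ∃ S : Finset (Set X),
    (∀ s ∈ S, Metric.diam s ≤ δ) ∧ (⋃ s ∈ S, s) = Set.univ ∧ S.card = k}

/-- The upper box dimension of `X`. -/
def upperBoxDim (X : Type*) [MetricSpace X] : ℝ :=
  Filter.limsup (fun δ : ℝ => Real.log (coverNum X δ : ℝ) / (-Real.log δ))
    (nhdsWithin 0 (Set.Ioi 0))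

/-- The lower box dimension of `X`. -/
def lowerBoxDim (X : Type*) [MetricSpace X] : ℝ :=
  Filter.liminf (fun δ : ℝ => Real.log (coverNum X δ : ℝ) / (-Real.log δ))
    (nhdsWithin 0 (Set.Ioi 0))

end

section Aux

variable {X : Type*} [MetricSpace X] {ι : Type*}

/-- Zero-length chain. -/
lemma chainFrom_zero (f : ι → X → X) (δ : ℝ) (a : X) : ChainFrom f δ a a 0 :=
  ⟨[], rfl, fun _ => a, fun j h => absurd h (Nat.not_lt_zero j), rfl, rfl⟩

/-- Concatenation of chains. -/
lemma chainFrom_trans (f : ι → X → X) {δ : ℝ} {a b c' : X} {n p : ℕ}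
    (h1 : ChainFrom f δ a b n) (h2 : ChainFrom f δ b c' p) : ChainFrom f δ a c' (n + p) := by
  obtain ⟨w1, hl1, c1, hc1, h10, h1n⟩ := h1
  obtain ⟨w2, hl2, c2, hc2, h20, h2p⟩ := h2
  refine ⟨w1 ++ w2, by simp [hl1, hl2], fun j => if j < n then c1 j else c2 (j - n), ?_, ?_, ?_⟩
  · intro j hj
    rw [List.length_append, hl1, hl2] at hj
    by_cases h : j < n
    · have hlt : j < w1.length := by omega
      have hget : (w1 ++ w2).get ⟨j, by simp; omega⟩ = w1.get ⟨j, hlt⟩ := by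
        simp only [List.get_eq_getElem]
        exact List.getElem_append_left hlt
      have hc : (if j + 1 < n then c1 (j + 1) else c2 (j + 1 - n)) = c1 (j + 1) := by
        by_cases h' : j + 1 < n
        · simp [h']
        · have : j + 1 = n := by omega
          simp [this, h20, ← h1n, ← hl1]
      simp only [if_pos h, hget, hc]
      exact hc1 j (by omega)
    · have hge : w1.length ≤ j := by omega
      have hlt2 : j - n < w2.length := by omega
      have hget : (w1 ++ w2).get ⟨j, by simp; omega⟩ = w2.get ⟨j - n, hlt2⟩ := by
        simp only [List.get_eq_getElem]
        rw [List.getElem_append_right hge]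
        congr 1
        omega
      have hc : (if j + 1 < n then c1 (j + 1) else c2 (j + 1 - n)) = c2 (j - n + 1) := by
        have : j + 1 - n = j - n + 1 := by omega
        simp [show ¬ (j + 1 < n) by omega, this]
      simp only [if_neg h, hget, hc]
      exact hc2 (j - n) (by omega)
  · by_cases h : 0 < n
    · simp [h, h10]
    · have hn : n = 0 := by omega
      have : a = b := by rw [← h10, ← h1n, hn]
      simp [hn, h20, ← this]
  · simp [show ¬ (n + p < n) by omega, ← h2p]

end Aux

section Aux2
set_option linter.unusedSectionVars false

variable {X : Type*} [MetricSpace X] [CompactSpace X] {m : ℕ}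

/-- Uniform modulus of continuity for all generators. -/
lemma mod_lemma (f : Fin m → X → X) (hf : ∀ i, Continuous (f i)) {ε : ℝ} (hε : 0 < ε) :
    ∃ δ > 0, ∀ i a b, dist a b ≤ δ → dist (f i a) (f i b) ≤ ε := by
  have H : ∀ i : Fin m, ∃ δ > 0, ∀ a b : X, dist a b ≤ δ → dist (f i a) (f i b) ≤ ε := by
    intro i
    obtain ⟨δ, hδ, h⟩ := Metric.uniformContinuous_iff.mp
      (CompactSpace.uniformContinuous_of_continuous (hf i)) ε hε
    exact ⟨δ / 2, by linarith, fun a b hab => le_of_lt (h (lt_of_le_of_lt hab (by linarith)))⟩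
  choose δ hδpos hδ using H
  rcases isEmpty_or_nonempty (Fin m) with hm | hm
  · exact ⟨1, one_pos, fun i => isEmptyElim i⟩
  · refine ⟨Finset.univ.inf' (Finset.univ_nonempty) δ, ?_, ?_⟩
    · exact (Finset.lt_inf'_iff _).mpr fun i _ => hδpos i
    · intro i a b hab
      exact hδ i a b (hab.trans (Finset.inf'_le _ (Finset.mem_univ i)))

/-- Key lemma: a fine chain of length `k` tracks the composed map within `ε`. -/
lemma track_lemma (f : Fin m → X → X) (hf : ∀ i, Continuous (f i)) :
    ∀ (k : ℕ) (ε : ℝ), 0 < ε → ∃ δ > 0, ∀ (u : Fin k → Fin m) (c : ℕ → X),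
      (∀ j, (hj : j < k) → dist (f (u ⟨k - 1 - j, by omega⟩) (c j)) (c (j + 1)) ≤ δ) →
      dist (applyWord f (List.ofFn u) (c 0)) (c k) ≤ ε := by
  intro k
  induction k with
  | zero =>
    intro ε hε
    exact ⟨ε, hε, fun u c _ => by simp [applyWord]; positivity⟩
  | succ k ih =>
    intro ε hε
    obtain ⟨η, hη, hmod⟩ := mod_lemma f hf (show (0:ℝ) < ε / 2 by linarith)
    obtain ⟨δ', hδ', hIH⟩ := ih η hη
    refine ⟨min δ' (ε / 2), by positivity, ?_⟩
    intro u c hc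
    have hinner : dist (applyWord f (List.ofFn fun t : Fin k => u t.succ) (c 0)) (c k) ≤ η := by
      apply hIH
      intro j hj
      have h1 : ((⟨k - 1 - j, by omega⟩ : Fin k).succ) = (⟨k + 1 - 1 - j, by omega⟩ : Fin (k + 1)) := by
        apply Fin.ext
        simp only [Fin.val_succ]
        omega
      show dist (f (u (⟨k - 1 - j, by omega⟩ : Fin k).succ) (c j)) (c (j + 1)) ≤ _
      rw [h1]
      exact (hc j (by omega)).trans (min_le_left _ _)
    have heq : applyWord f (List.ofFn u) (c 0)
        = f (u 0) (applyWord f (List.ofFn fun t : Fin k => u t.succ) (c 0)) := by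
      simp [applyWord, List.ofFn_succ]
    rw [heq]
    have h2 : dist (f (u 0) (applyWord f (List.ofFn fun t : Fin k => u t.succ) (c 0)))
        (f (u 0) (c k)) ≤ ε / 2 := hmod _ _ _ hinner
    have h3 : dist (f (u 0) (c k)) (c (k + 1)) ≤ ε / 2 := by
      have h0 : (⟨k + 1 - 1 - k, by omega⟩ : Fin (k + 1)) = 0 := by
        apply Fin.ext; simp
      have := hc k (by omega)
      rw [h0] at this
      exact this.trans (min_le_right _ _)
    calc dist _ (c (k + 1)) ≤ _ + _ := dist_triangle _ (f (u 0) (c k)) _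
    _ ≤ ε / 2 + ε / 2 := add_le_add h2 h3
    _ = ε := by ring

/-- Exact orbit identity. -/
lemma orbit_lemma (f : Fin m → X → X) :
    ∀ (k : ℕ) (u : Fin k → Fin m) (c : ℕ → X),
      (∀ j, (hj : j < k) → f (u ⟨k - 1 - j, by omega⟩) (c j) = c (j + 1)) →
      applyWord f (List.ofFn u) (c 0) = c k := by
  intro k
  induction k with
  | zero => intro u c _; simp [applyWord]
  | succ k ih =>
    intro u c hc
    have hinner : applyWord f (List.ofFn fun t : Fin k => u t.succ) (c 0) = c k := by
      apply ih
      intro j hj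
      have h1 : ((⟨k - 1 - j, by omega⟩ : Fin k).succ) = (⟨k + 1 - 1 - j, by omega⟩ : Fin (k + 1)) := by
        apply Fin.ext
        simp only [Fin.val_succ]
        omega
      show f (u (⟨k - 1 - j, by omega⟩ : Fin k).succ) (c j) = c (j + 1)
      rw [h1]
      exact hc j (by omega)
    have heq : applyWord f (List.ofFn u) (c 0)
        = f (u 0) (applyWord f (List.ofFn fun t : Fin k => u t.succ) (c 0)) := by
      simp [applyWord, List.ofFn_succ]
    rw [heq, hinner]
    have h0 : (⟨k + 1 - 1 - k, by omega⟩ : Fin (k + 1)) = 0 := by apply Fin.ext; simp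
    have := hc k (by omega)
    rwa [h0] at this

/-- A single `G^k` step can be refined to a length-`k` chain for `f`. -/
lemma block_lemma (f : Fin m → X → X) {k : ℕ} (hk : 0 < k) {ε : ℝ} (hε : 0 < ε)
    (u : Fin k → Fin m) (a b : X) (h : dist (applyWord f (List.ofFn u) a) b ≤ ε) :
    ChainFrom f ε a b k := by
  set orb : ℕ → X := fun t =>
    Nat.rec a (fun t x => if h : t < k then f (u ⟨k - 1 - t, by omega⟩) x else x) t with horb
  have horbsucc : ∀ t, (ht : t < k) → orb (t + 1) = f (u ⟨k - 1 - t, by omega⟩) (orb t) := by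
    intro t ht
    simp [horb, dif_pos ht]
  have hok : applyWord f (List.ofFn u) a = orb k := by
    apply orbit_lemma f k u orb
    intro j hj
    exact (horbsucc j hj).symm
  refine ⟨List.ofFn (fun t : Fin k => u ⟨k - 1 - t.1, by omega⟩), by simp,
    fun t => if t < k then orb t else b, ?_, ?_, ?_⟩
  · intro j hj
    simp only [List.length_ofFn] at hj
    have hget : (List.ofFn (fun t : Fin k => u ⟨k - 1 - t.1, by omega⟩)).get
        ⟨j, by simpa using hj⟩ = u ⟨k - 1 - j, by omega⟩ := by
      simp [List.get_ofFn]
    rw [hget]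
    simp only [if_pos hj]
    by_cases h' : j + 1 < k
    · simp only [if_pos h', ← horbsucc j hj]
      simp [le_of_lt hε]
    · have hjk : j + 1 = k := by omega
      simp only [if_neg h']
      rw [← horbsucc j hj, hjk, ← hok]
      exact h
  · simp [hk, horb]
  · simp

end Aux2
theorem stmt9 {X : Type*} [MetricSpace X] [CompactSpace X] {m : ℕ}
    (f : Fin m → X → X) (hf : ∀ i, Continuous (f i)) :
    ∀ k : ℕ, 0 < k → (ChainRecurrent f ↔ ChainRecurrent (powerGens f k)) := by
  intro k hk
  constructor
  · -- forward direction
    intro hcr x ε hε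
    obtain ⟨δ, hδ, hA⟩ := track_lemma f hf k ε hε
    obtain ⟨n, hn, w, hw, c, hchain, hc0, hcn⟩ := hcr x δ hδ
    -- repeat the chain k times
    have hrep : ∀ j : ℕ, ChainFrom f δ x x (j * n) := by
      intro j
      induction j with
      | zero => simpa using chainFrom_zero f δ x
      | succ j ihj =>
        have := chainFrom_trans f ihj ⟨w, hw, c, hchain, hc0, hcn⟩
        simpa [Nat.succ_mul] using this
    obtain ⟨w', hw', c', hchain', hc0', hcn'⟩ := hrep k
    -- now build the G^k chain of length n
    have hbound : ∀ j t : ℕ, j < n → t < k → k * j + (k - 1 - t) < k * n := by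
      intro j t hj ht
      have h1 : k * (j + 1) ≤ k * n := Nat.mul_le_mul_left k hj
      have h2 : k * (j + 1) = k * j + k := Nat.mul_succ k j
      omega
    refine ⟨n, hn, List.ofFn (fun j : Fin n => fun t : Fin k =>
      w'.get ⟨k * j.1 + (k - 1 - t.1), by rw [hw']; exact hbound j.1 t.1 j.2 t.2⟩),
      by simp, fun j => c' (k * j), ?_, by simpa using hc0', ?_⟩
    · intro j hj
      simp only [List.length_ofFn] at hj
      have hget : (List.ofFn (fun j : Fin n => fun t : Fin k =>
          w'.get ⟨k * j.1 + (k - 1 - t.1), by rw [hw']; exact hbound j.1 t.1 j.2 t.2⟩)).get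
          ⟨j, by simpa using hj⟩ = fun t : Fin k =>
          w'.get ⟨k * j + (k - 1 - t.1), by rw [hw']; exact hbound j t.1 hj t.2⟩ := by
        simp [List.get_ofFn]
      rw [hget]
      show dist (applyWord f (List.ofFn _) (c' (k * j))) _ ≤ ε
      have hstep := hA (fun t : Fin k =>
          w'.get ⟨k * j + (k - 1 - t.1), by rw [hw']; exact hbound j t.1 hj t.2⟩)
        (fun t => c' (k * j + t)) ?_
      · have hmul : k * (j + 1) = k * j + k := Nat.mul_succ k j
        simpa [hmul] using hstep
      · intro t ht
        have hidx : k - 1 - (k - 1 - t) = t := by omega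
        have hw'len : k * j + t < w'.length := by
          rw [hw']
          have := hbound j (k - 1 - t) hj (by omega)
          omega
        have hgg : w'.get ⟨k * j + (k - 1 - (k - 1 - t)), by rw [hw']; omega⟩
            = w'.get ⟨k * j + t, hw'len⟩ := by
          congr 1
          simp [hidx]
        simp only
        rw [hgg]
        exact hchain' (k * j + t) (by rw [hw'] at hw'len ⊢; omega)
    · simp [← hcn']
  · -- reverse direction
    intro hcr x ε hε
    obtain ⟨n, hn, W, hW, c, hchain, hc0, hcn⟩ := hcr x ε hε
    -- build an f-chain of length n * k by concatenating blocks
    have hblocks : ∀ j : ℕ, j ≤ n → ChainFrom f ε x (c j) (j * k) := by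
      intro j hj
      induction j with
      | zero => simpa [← hc0] using chainFrom_zero f ε x
      | succ j ihj =>
        have hj' : j < n := by omega
        have hprev := ihj (by omega)
        have hblock : ChainFrom f ε (c j) (c (j + 1)) k := by
          apply block_lemma f hk hε (W.get ⟨j, by rw [hW]; exact hj'⟩)
          exact hchain j (by rw [hW]; exact hj')
        have := chainFrom_trans f hprev hblock
        simpa [Nat.succ_mul] using this
    have := hblocks n le_rfl
    rw [hcn] at this
    exact ⟨n * k, by positivity, this⟩
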